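/- Suppose Y ∈ L²(P) and g₀(1,X), g₀(0,X) ∈ L²(P). Set u := Y − g₀(Z,X) and v := D − m₀(Z,X). Then for every θ ∈ ℝ, E_P[ψ(W; θ, η₀)²] = E_P[(g₀(1,X) − g₀(0,X) − θ(m₀(1,X) − m₀(0,X)))²] + E_P[Z(u − θv)²/p₀(X)² + (1−Z)(u − θv)²/(1 − p₀(X))²], and consequently E_P[ψ(W; θ, η₀)²] ≥ E_P[(u − θv)²]/(1 − ε)². -/

import Mathlib

/-!
Write `A(X) = g₀(1,X) − g₀(0,X) − θ (m₀(1,X) − m₀(0,X))`, `r = u − θ v` and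
`w = Z / p₀(X) − (1 − Z) / (1 − p₀(X))` for the inverse-propensity weight. Because `Z ∈ {0,1}`,
the score is pointwise `ψ = A(X) + w r`. Both `A(X)` and `w` are `σ(Z,X)`-measurable while
`E[r | Z,X] = 0`, so the cross term has mean zero and `E ψ² = E A(X)² + E (w r)²`; moreover
`w² = Z / p₀² + (1 − Z) / (1 − p₀)² ≥ 1 / (1 − ε)²` under overlap.

Overlap is needed a second time, for integrability: `m₀(z, ·)` is only pinned down by
`E[D | Z,X]` where `Z = z`, and `E[Z | X] ≥ ε`, `E[1 − Z | X] ≥ ε` transfer the bound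
`|m₀(Z,X)| ≤ 1` to both arms.
-/

open MeasureTheory

noncomputable def ipwWeight (z p : ℝ) : ℝ := z / p - (1 - z) / (1 - p)

lemma ipwWeight_sq {z : ℝ} (hz : z = 0 ∨ z = 1) (p : ℝ) :
    ipwWeight z p ^ 2 = z / p ^ 2 + (1 - z) / (1 - p) ^ 2 := by
  rcases hz with rfl | rfl <;> simp [ipwWeight]

lemma ipwWeight_mul_sq {z : ℝ} (hz : z = 0 ∨ z = 1) (p r : ℝ) :
    (ipwWeight z p * r) ^ 2 = z * r ^ 2 / p ^ 2 + (1 - z) * r ^ 2 / (1 - p) ^ 2 := by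
  rw [mul_pow, ipwWeight_sq hz]
  ring

lemma abs_ipwWeight_le {z p ε : ℝ} (hz : z = 0 ∨ z = 1) (hε : 0 < ε) (hp : ε ≤ p)
    (hp' : p ≤ 1 - ε) : |ipwWeight z p| ≤ ε⁻¹ := by
  rcases hz with rfl | rfl
  · rw [ipwWeight, zero_div, zero_sub, sub_zero, abs_neg, one_div,
      abs_of_pos (inv_pos.mpr (by linarith))]
    exact inv_anti₀ hε (by linarith)
  · rw [ipwWeight, sub_self, zero_div, sub_zero, one_div, abs_of_pos (inv_pos.mpr (by linarith))]
    exact inv_anti₀ hε hp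

lemma inv_sq_le_ipwWeight_sq {z p ε : ℝ} (hz : z = 0 ∨ z = 1) (hε : 0 < ε) (hp : ε ≤ p)
    (hp' : p ≤ 1 - ε) : ((1 - ε) ^ 2)⁻¹ ≤ ipwWeight z p ^ 2 := by
  rw [ipwWeight_sq hz]
  rcases hz with rfl | rfl
  · rw [sub_zero, zero_div, zero_add, one_div]
    exact inv_anti₀ (pow_pos (by linarith) 2) (pow_le_pow_left₀ (by linarith) (by linarith) 2)
  · rw [sub_self, zero_div, add_zero, one_div]
    exact inv_anti₀ (pow_pos (by linarith) 2) (pow_le_pow_left₀ (by linarith) hp' 2)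

lemma score_eq_add_ipwWeight_mul {z : ℝ} (hz : z = 0 ∨ z = 1) (g m : ℝ → ℝ) (y d p θ : ℝ) :
    g 1 - g 0 + z * (y - g 1) / p - (1 - z) * (y - g 0) / (1 - p)
        - θ * (m 1 - m 0 + z * (d - m 1) / p - (1 - z) * (d - m 0) / (1 - p))
      = g 1 - g 0 - θ * (m 1 - m 0) + ipwWeight z p * (y - g z - θ * (d - m z)) := by
  rcases hz with rfl | rfl <;> simp only [ipwWeight] <;> ring

section CondExp

variable {Ω : Type*} {m mΩ : MeasurableSpace Ω} {μ : Measure Ω}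

lemma condExp_sub_eq_zero_of_condExp_ae_eq [IsFiniteMeasure μ] (hm : m ≤ mΩ) {f g : Ω → ℝ}
    (hf : Integrable f μ) (hg : StronglyMeasurable[m] g) (hfg : μ[f|m] =ᵐ[μ] g) :
    μ[f - g|m] =ᵐ[μ] 0 := by
  have hgi : Integrable g μ := integrable_condExp.congr hfg
  filter_upwards [condExp_sub hf hgi m, hfg] with ω h1 h2
  rw [h1, Pi.sub_apply, condExp_of_stronglyMeasurable hm hg hgi, h2, Pi.zero_apply, sub_self]

lemma condExp_mul_eq_zero_of_condExp_eq_zero {w r : Ω → ℝ} (hw : StronglyMeasurable[m] w)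
    (hwr : Integrable (w * r) μ) (hr : Integrable r μ) (h : μ[r|m] =ᵐ[μ] 0) :
    μ[w * r|m] =ᵐ[μ] 0 := by
  filter_upwards [condExp_mul_of_stronglyMeasurable_left hw hwr hr, h] with ω h1 h2
  rw [h1, Pi.mul_apply, h2, Pi.zero_apply, mul_zero]

lemma integral_add_sq_of_condExp_eq_zero [IsFiniteMeasure μ] (hm : m ≤ mΩ) {a b : Ω → ℝ}
    (ha : StronglyMeasurable[m] a) (ha2 : MemLp a 2 μ) (hb2 : MemLp b 2 μ)
    (hb : μ[b|m] =ᵐ[μ] 0) :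
    ∫ ω, (a ω + b ω) ^ 2 ∂μ = ∫ ω, a ω ^ 2 ∂μ + ∫ ω, b ω ^ 2 ∂μ := by
  have hab : Integrable (a * b) μ := ha2.integrable_mul hb2
  have hcross : ∫ ω, (a * b) ω ∂μ = 0 := by
    rw [← integral_condExp hm, integral_congr_ae
      (condExp_mul_eq_zero_of_condExp_eq_zero ha hab (hb2.integrable one_le_two) hb)]
    simp
  calc ∫ ω, (a ω + b ω) ^ 2 ∂μ = ∫ ω, (a ω ^ 2 + 2 * (a * b) ω + b ω ^ 2) ∂μ := by
        congr with ω; simp only [Pi.mul_apply]; ring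
    _ = ∫ ω, a ω ^ 2 ∂μ + ∫ ω, b ω ^ 2 ∂μ := by
        rw [integral_add (f := fun ω => a ω ^ 2 + 2 * (a * b) ω)
            (ha2.integrable_sq.add (hab.const_mul 2)) hb2.integrable_sq,
          integral_add ha2.integrable_sq (hab.const_mul 2), integral_const_mul, hcross,
          mul_zero, add_zero]

lemma ae_apply_mem_of_le_condExp [IsFiniteMeasure μ] {𝒳 : Type*} [m𝒳 : MeasurableSpace 𝒳]
    {X : Ω → 𝒳} (hX : Measurable X) {W : Ω → ℝ} (hW : Integrable W μ) {ε : ℝ} (hε : 0 < ε)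
    (hWX : ∀ᵐ ω ∂μ, ε ≤ μ[W|m𝒳.comap X] ω) {s : Set 𝒳} (hs : MeasurableSet s)
    (h : ∀ᵐ ω ∂μ, W ω ≠ 0 → X ω ∈ s) : ∀ᵐ ω ∂μ, X ω ∈ s := by
  have ht : MeasurableSet[m𝒳.comap X] (X ⁻¹' sᶜ) := ⟨sᶜ, hs.compl, rfl⟩
  have hW0 : ∫ ω in X ⁻¹' sᶜ, W ω ∂μ = 0 := by
    refine setIntegral_eq_zero_of_ae_eq_zero ?_
    filter_upwards [h] with ω hω hωt
    by_contra hne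
    exact hωt (hω hne)
  have hle : ε * μ.real (X ⁻¹' sᶜ) ≤ 0 :=
    calc ε * μ.real (X ⁻¹' sᶜ) = ∫ _ in X ⁻¹' sᶜ, ε ∂μ := by simp [mul_comm]
      _ ≤ ∫ ω in X ⁻¹' sᶜ, μ[W|m𝒳.comap X] ω ∂μ :=
        setIntegral_mono_ae integrableOn_const integrable_condExp.integrableOn hWX
      _ = 0 := by rw [setIntegral_condExp hX.comap_le hW ht, hW0]
  have hzero : μ (X ⁻¹' sᶜ) = 0 := by
    rw [← measureReal_eq_zero_iff]
    nlinarith [measureReal_nonneg (μ := μ) (s := X ⁻¹' sᶜ)]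
  filter_upwards [measure_eq_zero_iff_ae_notMem.mp hzero] with ω hω
  simpa using hω

lemma memLp_apply_of_mem_zero_one {F : ℝ → Ω → ℝ} {Z : Ω → ℝ} (hZ : ∀ ω, Z ω = 0 ∨ Z ω = 1)
    (hF : AEStronglyMeasurable (fun ω => F (Z ω) ω) μ) {p : ENNReal} (h1 : MemLp (F 1) p μ)
    (h0 : MemLp (F 0) p μ) : MemLp (fun ω => F (Z ω) ω) p μ := by
  refine (h1.norm.add h0.norm).of_le hF (ae_of_all _ fun ω => ?_)
  refine le_trans ?_ (Real.le_norm_self _)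
  rcases hZ ω with h | h <;> simp [h]

lemma condExp_sub_smul_eq_zero {u v : Ω → ℝ} (hu : Integrable u μ) (hv : Integrable v μ)
    (hu0 : μ[u|m] =ᵐ[μ] 0) (hv0 : μ[v|m] =ᵐ[μ] 0) (θ : ℝ) : μ[u - θ • v|m] =ᵐ[μ] 0 := by
  filter_upwards [condExp_sub hu (hv.smul θ) m, condExp_smul θ v m, hu0, hv0] with ω h1 h2 h3 h4
  rw [h1, Pi.sub_apply, h2, Pi.smul_apply, h3, h4]
  simp

end CondExp

section IPW

variable {Ω : Type*} {m mΩ : MeasurableSpace Ω} {μ : Measure Ω} {Z p r : Ω → ℝ} {ε : ℝ}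

lemma memLp_ipwWeight_mul (hZ : ∀ ω, Z ω = 0 ∨ Z ω = 1) (hε : 0 < ε)
    (hp : ∀ᵐ ω ∂μ, ε ≤ p ω ∧ p ω ≤ 1 - ε)
    (hw : AEStronglyMeasurable (fun ω => ipwWeight (Z ω) (p ω)) μ) (hr : MemLp r 2 μ) :
    MemLp (fun ω => ipwWeight (Z ω) (p ω) * r ω) 2 μ := by
  refine hr.of_le_mul (c := ε⁻¹) (hw.mul hr.aestronglyMeasurable) ?_
  filter_upwards [hp] with ω hpω
  rw [norm_mul, Real.norm_eq_abs]
  exact mul_le_mul_of_nonneg_right (abs_ipwWeight_le (hZ ω) hε hpω.1 hpω.2) (norm_nonneg _)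

lemma integral_sq_div_le_integral_ipw_sq [IsFiniteMeasure μ] (hZ : ∀ ω, Z ω = 0 ∨ Z ω = 1)
    (hε : 0 < ε) (hp : ∀ᵐ ω ∂μ, ε ≤ p ω ∧ p ω ≤ 1 - ε)
    (hw : AEStronglyMeasurable (fun ω => ipwWeight (Z ω) (p ω)) μ) (hr : MemLp r 2 μ) :
    (∫ ω, r ω ^ 2 ∂μ) / (1 - ε) ^ 2
      ≤ ∫ ω, (Z ω * r ω ^ 2 / p ω ^ 2 + (1 - Z ω) * r ω ^ 2 / (1 - p ω) ^ 2) ∂μ := by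
  have hsq := fun ω => ipwWeight_mul_sq (hZ ω) (p ω) (r ω)
  rw [← integral_div]
  refine integral_mono_ae (hr.integrable_sq.div_const _)
    ((memLp_ipwWeight_mul hZ hε hp hw hr).integrable_sq.congr (ae_of_all _ hsq)) ?_
  filter_upwards [hp] with ω hpω
  rw [← hsq, mul_pow, div_eq_inv_mul]
  exact mul_le_mul_of_nonneg_right (inv_sq_le_ipwWeight_sq (hZ ω) hε hpω.1 hpω.2) (sq_nonneg _)

lemma integral_sq_add_ipwWeight_mul_eq_and_ge [IsFiniteMeasure μ] (hm : m ≤ mΩ) {a : Ω → ℝ}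
    (ha : StronglyMeasurable[m] a) (ha2 : MemLp a 2 μ) (hZ : ∀ ω, Z ω = 0 ∨ Z ω = 1)
    (hε : 0 < ε) (hp : ∀ᵐ ω ∂μ, ε ≤ p ω ∧ p ω ≤ 1 - ε)
    (hw : StronglyMeasurable[m] fun ω => ipwWeight (Z ω) (p ω)) (hr : MemLp r 2 μ)
    (hr0 : μ[r|m] =ᵐ[μ] 0) :
    ∫ ω, (a ω + ipwWeight (Z ω) (p ω) * r ω) ^ 2 ∂μ
      = ∫ ω, a ω ^ 2 ∂μ
        + ∫ ω, (Z ω * r ω ^ 2 / p ω ^ 2 + (1 - Z ω) * r ω ^ 2 / (1 - p ω) ^ 2) ∂μ ∧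
    ∫ ω, (a ω + ipwWeight (Z ω) (p ω) * r ω) ^ 2 ∂μ ≥ (∫ ω, r ω ^ 2 ∂μ) / (1 - ε) ^ 2 := by
  have hwr := memLp_ipwWeight_mul hZ hε hp (hw.mono hm).aestronglyMeasurable hr
  have hsplit : ∫ ω, (a ω + ipwWeight (Z ω) (p ω) * r ω) ^ 2 ∂μ
      = ∫ ω, a ω ^ 2 ∂μ
        + ∫ ω, (Z ω * r ω ^ 2 / p ω ^ 2 + (1 - Z ω) * r ω ^ 2 / (1 - p ω) ^ 2) ∂μ := by
    rw [integral_add_sq_of_condExp_eq_zero hm ha ha2 hwr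
      (condExp_mul_eq_zero_of_condExp_eq_zero hw (hwr.integrable one_le_two)
        (hr.integrable one_le_two) hr0)]
    congr 1
    exact integral_congr_ae (ae_of_all _ fun ω => ipwWeight_mul_sq (hZ ω) _ _)
  have ha0 : 0 ≤ ∫ ω, a ω ^ 2 ∂μ := integral_nonneg fun ω => sq_nonneg (a ω)
  refine ⟨hsplit, ?_⟩
  rw [hsplit, ge_iff_le]
  linarith [integral_sq_div_le_integral_ipw_sq hZ hε hp (hw.mono hm).aestronglyMeasurable hr]

end IPW

section Model

variable {Ω 𝒳 : Type*} [MeasurableSpace Ω] [m𝒳 : MeasurableSpace 𝒳] {P : Measure Ω}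
  {Z : Ω → ℝ} {X : Ω → 𝒳}

lemma ae_apply_mem_of_overlap [IsFiniteMeasure P] (hZm : Measurable Z) (hXm : Measurable X)
    (hZ : ∀ ω, Z ω = 0 ∨ Z ω = 1) {p : 𝒳 → ℝ}
    (hZX : P[Z|m𝒳.comap X] =ᵐ[P] fun ω => p (X ω)) {ε : ℝ} (hε : 0 < ε)
    (hp : ∀ᵐ ω ∂P, ε ≤ p (X ω) ∧ p (X ω) ≤ 1 - ε) {f : ℝ → 𝒳 → ℝ} (hf : ∀ z, Measurable (f z))
    {s : Set ℝ} (hs : MeasurableSet s) (h : ∀ᵐ ω ∂P, f (Z ω) (X ω) ∈ s) {z : ℝ}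
    (hz : z = 0 ∨ z = 1) : ∀ᵐ ω ∂P, f z (X ω) ∈ s := by
  have hZi : Integrable Z P := Integrable.of_bound hZm.aestronglyMeasurable 1
    (ae_of_all _ fun ω => by rcases hZ ω with h | h <;> simp [h])
  rcases hz with rfl | rfl
  · refine ae_apply_mem_of_le_condExp hXm ((integrable_const 1).sub hZi) hε ?_ (hf 0 hs) ?_
    · filter_upwards [condExp_sub (integrable_const 1) hZi (m𝒳.comap X), hZX, hp]
        with ω h1 h2 h3
      rw [h1, Pi.sub_apply, condExp_const hXm.comap_le, h2]
      linarith [h3.2]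
    · filter_upwards [h] with ω hω hne
      obtain h0 | h1 := hZ ω
      · rwa [h0] at hω
      · simp [h1] at hne
  · refine ae_apply_mem_of_le_condExp hXm hZi hε ?_ (hf 1 hs) ?_
    · filter_upwards [hZX, hp] with ω h1 h2
      rw [h1]
      exact h2.1
    · filter_upwards [h] with ω hω hne
      obtain h0 | h1 := hZ ω
      · exact absurd h0 hne
      · rwa [h1] at hω

lemma memLp_apply_of_overlap [IsFiniteMeasure P] (hZm : Measurable Z) (hXm : Measurable X)
    (hZ : ∀ ω, Z ω = 0 ∨ Z ω = 1) {p : 𝒳 → ℝ} (hZX : P[Z|m𝒳.comap X] =ᵐ[P] fun ω => p (X ω))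
    {ε : ℝ} (hε : 0 < ε) (hp : ∀ᵐ ω ∂P, ε ≤ p (X ω) ∧ p (X ω) ≤ 1 - ε) {f : ℝ → 𝒳 → ℝ}
    (hf : Measurable (Function.uncurry f)) {C : ℝ} (hC : ∀ᵐ ω ∂P, ‖f (Z ω) (X ω)‖ ≤ C)
    {z : ℝ} (hz : z = 0 ∨ z = 1) {q : ENNReal} : MemLp (fun ω => f z (X ω)) q P := by
  have hsec : ∀ z, Measurable (f z) := fun z => hf.comp (measurable_const.prodMk measurable_id)
  refine MemLp.of_bound ((hsec z).comp hXm).aestronglyMeasurable C ?_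
  have hC' : ∀ᵐ ω ∂P, f (Z ω) (X ω) ∈ Metric.closedBall 0 C := by
    filter_upwards [hC] with ω h using mem_closedBall_zero_iff.mpr h
  filter_upwards [ae_apply_mem_of_overlap hZm hXm hZ hZX hε hp hsec
    Metric.isClosed_closedBall.measurableSet hC' hz] with ω h using mem_closedBall_zero_iff.mp h

variable {g : ℝ → 𝒳 → ℝ} {Y u : Ω → ℝ}

lemma memLp_residual (hZX : Measurable fun ω => (Z ω, X ω)) (hZ : ∀ ω, Z ω = 0 ∨ Z ω = 1)
    (hg : Measurable (Function.uncurry g)) {q : ENNReal} (hY : MemLp Y q P)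
    (hg1 : MemLp (fun ω => g 1 (X ω)) q P) (hg0 : MemLp (fun ω => g 0 (X ω)) q P)
    (hu : ∀ ω, u ω = Y ω - g (Z ω) (X ω)) : MemLp u q P := by
  rw [show u = _ from funext hu]
  exact hY.sub (memLp_apply_of_mem_zero_one (F := fun z ω => g z (X ω)) hZ
    (hg.comp hZX).aestronglyMeasurable hg1 hg0)

lemma condExp_residual_eq_zero [IsFiniteMeasure P] (hZX : Measurable fun ω => (Z ω, X ω))
    (hg : Measurable (Function.uncurry g)) (hY : Integrable Y P)
    (hcY : P[Y|MeasurableSpace.comap (fun ω => (Z ω, X ω)) inferInstance]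
      =ᵐ[P] fun ω => g (Z ω) (X ω))
    (hu : ∀ ω, u ω = Y ω - g (Z ω) (X ω)) :
    P[u|MeasurableSpace.comap (fun ω => (Z ω, X ω)) inferInstance] =ᵐ[P] 0 := by
  rw [show u = _ from funext hu]
  exact condExp_sub_eq_zero_of_condExp_ae_eq hZX.comap_le hY
    (hg.comp (comap_measurable _)).stronglyMeasurable hcY

end Model

theorem stmt3_general
    {Ω 𝒳 : Type*} [MeasurableSpace Ω] [MeasurableSpace 𝒳]
    (P : Measure Ω) [IsProbabilityMeasure P]
    (Y D Z : Ω → ℝ) (X : Ω → 𝒳)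
    (hDm : Measurable D) (hZm : Measurable Z) (hXm : Measurable X)
    (hDval : ∀ ω, D ω = 0 ∨ D ω = 1) (hZval : ∀ ω, Z ω = 0 ∨ Z ω = 1)
    (g0 m0 : ℝ → 𝒳 → ℝ) (p0 : 𝒳 → ℝ)
    (hg0m : Measurable (Function.uncurry g0)) (hm0m : Measurable (Function.uncurry m0))
    (hp0m : Measurable p0)
    (hcY : P[Y | MeasurableSpace.comap (fun ω => (Z ω, X ω)) inferInstance]
        =ᵐ[P] fun ω => g0 (Z ω) (X ω))
    (hcD : P[D | MeasurableSpace.comap (fun ω => (Z ω, X ω)) inferInstance]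
        =ᵐ[P] fun ω => m0 (Z ω) (X ω))
    (hcZ : P[Z | MeasurableSpace.comap X inferInstance] =ᵐ[P] fun ω => p0 (X ω))
    (ε : ℝ) (hε : ε ∈ Set.Ioo (0 : ℝ) (1 / 2))
    (hp0bd : ∀ᵐ ω ∂P, ε ≤ p0 (X ω) ∧ p0 (X ω) ≤ 1 - ε)
    -- square-integrability hypotheses
    (hY2 : MemLp Y 2 P)
    (hg01 : MemLp (fun ω => g0 1 (X ω)) 2 P)
    (hg00 : MemLp (fun ω => g0 0 (X ω)) 2 P)
    -- residuals
    (u v : Ω → ℝ)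
    (hu : ∀ ω, u ω = Y ω - g0 (Z ω) (X ω))
    (hv : ∀ ω, v ω = D ω - m0 (Z ω) (X ω))
    -- the AR-type score evaluated at the true nuisance parameter η₀
    (ψ : ℝ → Ω → ℝ)
    (hψ : ∀ θ ω, ψ θ ω =
      g0 1 (X ω) - g0 0 (X ω)
        + Z ω * (Y ω - g0 1 (X ω)) / p0 (X ω)
        - (1 - Z ω) * (Y ω - g0 0 (X ω)) / (1 - p0 (X ω))
        - θ * (m0 1 (X ω) - m0 0 (X ω)
            + Z ω * (D ω - m0 1 (X ω)) / p0 (X ω)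
            - (1 - Z ω) * (D ω - m0 0 (X ω)) / (1 - p0 (X ω)))) :
    ∀ θ : ℝ,
      (∫ ω, (ψ θ ω) ^ 2 ∂P
        = (∫ ω, (g0 1 (X ω) - g0 0 (X ω) - θ * (m0 1 (X ω) - m0 0 (X ω))) ^ 2 ∂P)
          + ∫ ω, (Z ω * (u ω - θ * v ω) ^ 2 / (p0 (X ω)) ^ 2
              + (1 - Z ω) * (u ω - θ * v ω) ^ 2 / (1 - p0 (X ω)) ^ 2) ∂P) ∧
      (∫ ω, (ψ θ ω) ^ 2 ∂P ≥ (∫ ω, (u ω - θ * v ω) ^ 2 ∂P) / (1 - ε) ^ 2) := by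
  intro θ
  obtain ⟨hε0, -⟩ := hε
  have hZX : Measurable fun ω => (Z ω, X ω) := hZm.prodMk hXm
  have hD1 : ∀ ω, |D ω| ≤ 1 := fun ω => by rcases hDval ω with h | h <;> simp [h]
  have hD2 : MemLp D 2 P := MemLp.of_bound hDm.aestronglyMeasurable 1 (ae_of_all _ hD1)
  have hm0arm : ∀ z, z = 0 ∨ z = 1 → MemLp (fun ω => m0 z (X ω)) 2 P := by
    refine fun z hz => memLp_apply_of_overlap hZm hXm hZval hcZ hε0 hp0bd hm0m (C := 1) ?_ hz
    filter_upwards [ae_bdd_abs_condExp_of_ae_bdd_abs (ae_of_all P hD1), hcD] with ω h1 h2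
    rwa [← h2]
  have hu2 := memLp_residual hZX hZval hg0m hY2 hg01 hg00 hu
  have hv2 := memLp_residual hZX hZval hm0m hD2 (hm0arm 1 (Or.inr rfl)) (hm0arm 0 (Or.inl rfl)) hv
  have hr0 := condExp_sub_smul_eq_zero (hu2.integrable one_le_two) (hv2.integrable one_le_two)
    (condExp_residual_eq_zero hZX hg0m (hY2.integrable one_le_two) hcY hu)
    (condExp_residual_eq_zero hZX hm0m (hD2.integrable one_le_two) hcD hv) θ
  have hψA : ψ θ = fun ω => g0 1 (X ω) - g0 0 (X ω) - θ * (m0 1 (X ω) - m0 0 (X ω))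
      + ipwWeight (Z ω) (p0 (X ω)) * (u ω - θ * v ω) := by
    funext ω
    rw [hψ, hu, hv]
    exact score_eq_add_ipwWeight_mul (hZval ω) (g0 · (X ω)) (m0 · (X ω)) _ _ _ _
  have hsm : ∀ F : ℝ × 𝒳 → ℝ, Measurable F →
      StronglyMeasurable[MeasurableSpace.comap (fun ω => (Z ω, X ω)) inferInstance]
        fun ω => F (Z ω, X ω) :=
    fun F hF => (hF.comp (comap_measurable _)).stronglyMeasurable
  have hg (z : ℝ) : Measurable (g0 z) := hg0m.comp (measurable_const.prodMk measurable_id)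
  have hm (z : ℝ) : Measurable (m0 z) := hm0m.comp (measurable_const.prodMk measurable_id)
  rw [hψA]
  exact integral_sq_add_ipwWeight_mul_eq_and_ge hZX.comap_le
    (hsm (fun q => g0 1 q.2 - g0 0 q.2 - θ * (m0 1 q.2 - m0 0 q.2)) (by fun_prop))
    ((hg01.sub hg00).sub (((hm0arm 1 (Or.inr rfl)).sub (hm0arm 0 (Or.inl rfl))).const_mul θ))
    hZval hε0 hp0bd (hsm (fun q => ipwWeight q.1 (p0 q.2)) (by unfold ipwWeight; fun_prop))
    (hu2.sub (hv2.const_mul θ)) hr0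

/-- If `Y ∈ L²(P)` and `g₀(1,X), g₀(0,X) ∈ L²(P)`, then with
`u := Y − g₀(Z,X)` and `v := D − m₀(Z,X)`, for every `θ ∈ ℝ`,
`E_P[ψ(W; θ, η₀)²] = E_P[(g₀(1,X) − g₀(0,X) − θ(m₀(1,X) − m₀(0,X)))²]
  + E_P[Z(u − θv)²/p₀(X)² + (1−Z)(u − θv)²/(1 − p₀(X))²]`,
and consequently `E_P[ψ(W; θ, η₀)²] ≥ E_P[(u − θv)²]/(1 − ε)²`. -/
theorem stmt3
    {Ω 𝒳 : Type*} [MeasurableSpace Ω] [MeasurableSpace 𝒳]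
    (P : Measure Ω) [IsProbabilityMeasure P]
    (Y D Z : Ω → ℝ) (X : Ω → 𝒳)
    (hYm : Measurable Y) (hDm : Measurable D) (hZm : Measurable Z) (hXm : Measurable X)
    (hDval : ∀ ω, D ω = 0 ∨ D ω = 1) (hZval : ∀ ω, Z ω = 0 ∨ Z ω = 1)
    (g0 m0 : ℝ → 𝒳 → ℝ) (p0 : 𝒳 → ℝ)
    (hg0m : Measurable (Function.uncurry g0)) (hm0m : Measurable (Function.uncurry m0))
    (hp0m : Measurable p0)
    (hp0val : ∀ x, 0 < p0 x ∧ p0 x < 1)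
    (hcY : P[Y | MeasurableSpace.comap (fun ω => (Z ω, X ω)) inferInstance]
        =ᵐ[P] fun ω => g0 (Z ω) (X ω))
    (hcD : P[D | MeasurableSpace.comap (fun ω => (Z ω, X ω)) inferInstance]
        =ᵐ[P] fun ω => m0 (Z ω) (X ω))
    (hcZ : P[Z | MeasurableSpace.comap X inferInstance] =ᵐ[P] fun ω => p0 (X ω))
    (ε : ℝ) (hε : ε ∈ Set.Ioo (0 : ℝ) (1 / 2))
    (hp0bd : ∀ᵐ ω ∂P, ε ≤ p0 (X ω) ∧ p0 (X ω) ≤ 1 - ε)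
    -- square-integrability hypotheses
    (hY2 : MemLp Y 2 P)
    (hg01 : MemLp (fun ω => g0 1 (X ω)) 2 P)
    (hg00 : MemLp (fun ω => g0 0 (X ω)) 2 P)
    -- residuals
    (u v : Ω → ℝ)
    (hu : ∀ ω, u ω = Y ω - g0 (Z ω) (X ω))
    (hv : ∀ ω, v ω = D ω - m0 (Z ω) (X ω))
    -- the AR-type score evaluated at the true nuisance parameter η₀
    (ψ : ℝ → Ω → ℝ)
    (hψ : ∀ θ ω, ψ θ ω =
      g0 1 (X ω) - g0 0 (X ω)
        + Z ω * (Y ω - g0 1 (X ω)) / p0 (X ω)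
        - (1 - Z ω) * (Y ω - g0 0 (X ω)) / (1 - p0 (X ω))
        - θ * (m0 1 (X ω) - m0 0 (X ω)
            + Z ω * (D ω - m0 1 (X ω)) / p0 (X ω)
            - (1 - Z ω) * (D ω - m0 0 (X ω)) / (1 - p0 (X ω)))) :
    ∀ θ : ℝ,
      (∫ ω, (ψ θ ω) ^ 2 ∂P
        = (∫ ω, (g0 1 (X ω) - g0 0 (X ω) - θ * (m0 1 (X ω) - m0 0 (X ω))) ^ 2 ∂P)
          + ∫ ω, (Z ω * (u ω - θ * v ω) ^ 2 / (p0 (X ω)) ^ 2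
              + (1 - Z ω) * (u ω - θ * v ω) ^ 2 / (1 - p0 (X ω)) ^ 2) ∂P) ∧
      (∫ ω, (ψ θ ω) ^ 2 ∂P ≥ (∫ ω, (u ω - θ * v ω) ^ 2 ∂P) / (1 - ε) ^ 2) :=
  stmt3_general P Y D Z X hDm hZm hXm hDval hZval g0 m0 p0 hg0m hm0m hp0m hcY hcD hcZ ε hε hp0bd hY2
    hg01 hg00 u v hu hv ψ hψ
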